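/- Suppose the newborn submatrix N̄ is irreducible (for every i,j there exists a power t with (N̄^t)_{ij} > 0) and ζ ∈ ℝ^n is a nonnegative vector with ∑_i ζ_i = 1 satisfying N̄ ζ = R₀ ζ. Define ξ ∈ ℝ^{mn} by ξ_{(1,i)} = ζ_i for all i and ξ_{(k,i)} = 0 for k ≠ 1. Then ξ is a nonnegative right eigenvector of N for the eigenvalue R₀, i.e. N ξ = R₀ ξ, and in particular ‖N ξ‖ = R₀. -/

import Mathlib

/-!
Since `F` has nonzero entries only in newborn rows and `D` never changes the stage,
the rows of `N = D F (I - D S)⁻¹` off the newborn indices vanish. Hence `N ξ` is `N̄ ζ = R₀ ζ`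
placed on the newborn indices, i.e. `R₀ ξ`, and `‖N ξ‖ = R₀ ∑ ζᵢ = R₀` because `R₀ ≥ 0`.
-/

open Matrix BigOperators

/-- Spectral radius of a real square matrix: the maximum modulus of its complex
eigenvalues (elements of the spectrum of the matrix viewed over `ℂ`). -/
noncomputable def specRad {ι : Type*} [Fintype ι] [DecidableEq ι]
    (M : Matrix ι ι ℝ) : ℝ :=
  sSup {r : ℝ | ∃ μ : ℂ, μ ∈ spectrum ℂ (M.map Complex.ofReal) ∧ r = ‖μ‖}

/-- The induced `L¹` operator norm of a real matrix: the maximum absolute column sum. -/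
noncomputable def colNorm {ι : Type*} [Fintype ι] (M : Matrix ι ι ℝ) : ℝ :=
  ⨆ q, ∑ p, |M p q|

/-- Local fecundity matrix: first row `(f 0, …, f (m-1))`, other rows zero. -/
def localF (m : ℕ) (f : Fin m → ℝ) : Matrix (Fin m) (Fin m) ℝ :=
  Matrix.of fun k' k => if (k' : ℕ) = 0 then f k else 0

/-- Local survival matrix: diagonal entries `sd k`, subdiagonal entries `ss k`,
all other entries zero. -/
def localS (m : ℕ) (sd ss : Fin m → ℝ) : Matrix (Fin m) (Fin m) ℝ :=
  Matrix.of fun k' k =>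
    if k' = k then sd k else if (k' : ℕ) = (k : ℕ) + 1 then ss k else 0

/-- Global (block-diagonal) fecundity matrix `F = ⊕ᵢ Fⁱ`, indexed by
(stage, patch) pairs. -/
def fecMat (m n : ℕ) (f : Fin m → Fin n → ℝ) :
    Matrix (Fin m × Fin n) (Fin m × Fin n) ℝ :=
  Matrix.of fun p q =>
    if p.2 = q.2 then localF m (fun k => f k q.2) p.1 q.1 else 0

/-- Global (block-diagonal) survival matrix `S = ⊕ᵢ Sⁱ`. -/
def survMat (m n : ℕ) (sd ss : Fin m → Fin n → ℝ) :
    Matrix (Fin m × Fin n) (Fin m × Fin n) ℝ :=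
  Matrix.of fun p q =>
    if p.2 = q.2 then localS m (fun k => sd k q.2) (fun k => ss k q.2) p.1 q.1 else 0

/-- Global dispersion matrix: the `(i,j)` patch block is `diag (d 0 i j, …, d (m-1) i j)`. -/
def dispMat (m n : ℕ) (d : Fin m → Fin n → Fin n → ℝ) :
    Matrix (Fin m × Fin n) (Fin m × Fin n) ℝ :=
  Matrix.of fun p q => if p.1 = q.1 then d q.1 p.2 q.2 else 0

/-- Next-generation matrix `N = D F (I - D S)⁻¹`. -/
noncomputable def nextGen (m n : ℕ) (f : Fin m → Fin n → ℝ)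
    (sd ss : Fin m → Fin n → ℝ) (d : Fin m → Fin n → Fin n → ℝ) :
    Matrix (Fin m × Fin n) (Fin m × Fin n) ℝ :=
  dispMat m n d * fecMat m n f * (1 - dispMat m n d * survMat m n sd ss)⁻¹

/-- Partial next-generation matrix `W = F (I - D S)⁻¹`. -/
noncomputable def partGen (m n : ℕ) (f : Fin m → Fin n → ℝ)
    (sd ss : Fin m → Fin n → ℝ) (d : Fin m → Fin n → Fin n → ℝ) :
    Matrix (Fin m × Fin n) (Fin m × Fin n) ℝ :=
  fecMat m n f * (1 - dispMat m n d * survMat m n sd ss)⁻¹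

/-- Newborn submatrix: keep only the rows and columns with stage index `0`
(the newborn indices). -/
def newbornSub {m n : ℕ} (hm : 0 < m)
    (B : Matrix (Fin m × Fin n) (Fin m × Fin n) ℝ) : Matrix (Fin n) (Fin n) ℝ :=
  Matrix.of fun i j => B (⟨0, hm⟩, i) (⟨0, hm⟩, j)

/-- The alternative net reproductive number `R̂₀ = max_{x ∈ 𝒳} ‖N x‖`, where `𝒳`
is the set of nonnegative `L¹`-unit vectors supported on the newborn indices. -/
noncomputable def altR0 (m n : ℕ)
    (N : Matrix (Fin m × Fin n) (Fin m × Fin n) ℝ) : ℝ :=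
  sSup {r : ℝ | ∃ x : Fin m × Fin n → ℝ, (∀ p, 0 ≤ x p) ∧ (∑ p, |x p|) = 1 ∧
    (∀ p : Fin m × Fin n, (p.1 : ℕ) ≠ 0 → x p = 0) ∧ r = ∑ p, |N.mulVec x p|}

lemma specRad_nonneg {ι : Type*} [Fintype ι] [DecidableEq ι] [Nonempty ι]
    (M : Matrix ι ι ℝ) : 0 ≤ specRad M := by
  obtain ⟨μ, hμ⟩ : (spectrum ℂ (M.map Complex.ofReal)).Nonempty :=
    spectrum.nonempty_of_isAlgClosed_of_finiteDimensional ℂ _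
  have hfin : {r : ℝ | ∃ μ : ℂ, μ ∈ spectrum ℂ (M.map Complex.ofReal) ∧ r = ‖μ‖}.Finite :=
    ((Matrix.finite_spectrum (M.map Complex.ofReal)).image (‖·‖)).subset
      fun r ⟨ν, hν, hr⟩ => ⟨ν, hν, hr.symm⟩
  exact (norm_nonneg μ).trans (le_csSup hfin.bddAbove ⟨μ, hμ, rfl⟩)

section Newborn

variable {m n : ℕ}

/-- The vector `ξ` built from `ζ` in the paper. -/
def newbornExt (ζ : Fin n → ℝ) : Fin m × Fin n → ℝ :=
  fun p => if (p.1 : ℕ) = 0 then ζ p.2 else 0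

lemma newbornExt_smul (c : ℝ) (ζ : Fin n → ℝ) :
    newbornExt (m := m) (c • ζ) = c • newbornExt ζ := by
  ext p
  by_cases hp : (p.1 : ℕ) = 0 <;> simp [newbornExt, hp]

lemma newbornExt_nonneg {ζ : Fin n → ℝ} (hζ : ∀ i, 0 ≤ ζ i) (p : Fin m × Fin n) :
    0 ≤ newbornExt ζ p := by
  unfold newbornExt
  split_ifs
  exacts [hζ _, le_rfl]

lemma sum_newbornExt (hm : 0 < m) (ζ : Fin n → ℝ) :
    ∑ p, newbornExt (m := m) ζ p = ∑ i, ζ i := by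
  rw [Fintype.sum_prod_type, Finset.sum_eq_single (⟨0, hm⟩ : Fin m)]
  · rfl
  · intro k _ hk
    have hk : (k : ℕ) ≠ 0 := fun h => hk (Fin.ext h)
    simp [newbornExt, hk]
  · simp

lemma mulVec_newbornExt (hm : 0 < m) (B : Matrix (Fin m × Fin n) (Fin m × Fin n) ℝ)
    (hB : ∀ p q, (p.1 : ℕ) ≠ 0 → B p q = 0) (ζ : Fin n → ℝ) :
    B *ᵥ newbornExt ζ = newbornExt (newbornSub hm B *ᵥ ζ) := by
  ext p
  by_cases hp : (p.1 : ℕ) = 0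
  · have hp₀ : p = (⟨0, hm⟩, p.2) := Prod.ext (Fin.ext hp) rfl
    simp only [newbornExt, if_pos hp, mulVec, dotProduct, Fintype.sum_prod_type]
    rw [Finset.sum_eq_single (⟨0, hm⟩ : Fin m), hp₀]
    · simp [newbornSub]
    · intro k _ hk
      have hk : (k : ℕ) ≠ 0 := fun h => hk (Fin.ext h)
      simp [hk]
    · simp
  · simp [newbornExt, hp, mulVec, dotProduct, hB p _ hp]

end Newborn

lemma dispMat_mul_fecMat_apply_of_ne_zero {m n : ℕ} (f : Fin m → Fin n → ℝ)
    (d : Fin m → Fin n → Fin n → ℝ) (p q : Fin m × Fin n) (hp : (p.1 : ℕ) ≠ 0) :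
    (dispMat m n d * fecMat m n f) p q = 0 := by
  refine Finset.sum_eq_zero fun r _ => ?_
  by_cases h : p.1 = r.1
  · simp [fecMat, localF, ← h, hp]
  · simp [dispMat, h]

lemma nextGen_apply_of_ne_zero {m n : ℕ} (f : Fin m → Fin n → ℝ)
    (sd ss : Fin m → Fin n → ℝ) (d : Fin m → Fin n → Fin n → ℝ)
    (p q : Fin m × Fin n) (hp : (p.1 : ℕ) ≠ 0) :
    nextGen m n f sd ss d p q = 0 := by
  rw [nextGen, mul_apply]
  exact Finset.sum_eq_zero fun r _ => by
    rw [dispMat_mul_fecMat_apply_of_ne_zero f d p r hp, zero_mul]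

theorem stmt8
    (m n : ℕ) (hm : 2 ≤ m)
    (f : Fin m → Fin n → ℝ)
    (sd ss : Fin m → Fin n → ℝ)
    (d : Fin m → Fin n → Fin n → ℝ)
    (ζ : Fin n → ℝ) (hζ0 : ∀ i, 0 ≤ ζ i) (hζ1 : ∑ i, ζ i = 1)
    (hζeig : (newbornSub (show 0 < m by omega) (nextGen m n f sd ss d)).mulVec ζ =
      specRad (nextGen m n f sd ss d) • ζ) :
    (∀ p : Fin m × Fin n,
        0 ≤ (fun p : Fin m × Fin n => if (p.1 : ℕ) = 0 then ζ p.2 else 0) p) ∧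
      (nextGen m n f sd ss d).mulVec
          (fun p : Fin m × Fin n => if (p.1 : ℕ) = 0 then ζ p.2 else 0) =
        specRad (nextGen m n f sd ss d) •
          (fun p : Fin m × Fin n => if (p.1 : ℕ) = 0 then ζ p.2 else 0) ∧
      (∑ p, |(nextGen m n f sd ss d).mulVec
          (fun p : Fin m × Fin n => if (p.1 : ℕ) = 0 then ζ p.2 else 0) p|) =
        specRad (nextGen m n f sd ss d) := by
  have hm0 : 0 < m := by omega
  set N := nextGen m n f sd ss d
  change (∀ p, 0 ≤ newbornExt ζ p) ∧ N *ᵥ newbornExt ζ = specRad N • newbornExt ζ ∧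
    ∑ p, |(N *ᵥ newbornExt ζ) p| = specRad N
  obtain ⟨i, -, -⟩ := Finset.exists_ne_zero_of_sum_ne_zero (hζ1.trans_ne one_ne_zero)
  have : Nonempty (Fin m × Fin n) := ⟨(⟨0, hm0⟩, i)⟩
  have heig : N *ᵥ newbornExt ζ = specRad N • newbornExt ζ := by
    rw [mulVec_newbornExt hm0 N (nextGen_apply_of_ne_zero f sd ss d) ζ, hζeig,
      newbornExt_smul]
  refine ⟨newbornExt_nonneg hζ0, heig, ?_⟩
  simp only [heig, Pi.smul_apply, smul_eq_mul, abs_mul, abs_of_nonneg (specRad_nonneg N),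
    abs_of_nonneg (newbornExt_nonneg hζ0 _), ← Finset.mul_sum, sum_newbornExt hm0, hζ1,
    mul_one]
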